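/- Let N ≥ 2, let x lie in the interior of C_N^A, and let φ : [0,∞) → ℝ^N be a continuously differentiable function taking values in the interior of C_N^A with φ(0) = x that solves the ODE of type A_{N−1}. Then for all t ≥ 0, ‖φ(t)‖² = N(N−1)·t + ‖x‖², where ‖·‖ is the Euclidean norm on ℝ^N. -/

import Mathlib

/-! The coordinate-wise product rule gives `d/dt ‖φ‖² = ∑ᵢ ∑_{j ≠ i} 2 φᵢ / (φᵢ - φⱼ)`. Pairing the
terms `(i, j)` and `(j, i)` turns each pair into `2 (φᵢ - φⱼ) / (φᵢ - φⱼ) = 2`, so the derivative is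
the constant `N (N - 1)` and `‖φ‖²` is affine in `t`. -/

open scoped BigOperators

noncomputable section

/-- The interior of the closed Weyl chamber of type A. -/
def interiorA {N : ℕ} (x : Fin N → ℝ) : Prop := StrictAnti x

/-- `φ` solves the ODE of type `A_{N-1}` on `[0,∞)`. -/
def solvesA {N : ℕ} (φ : ℝ → Fin N → ℝ) : Prop :=
  ∀ t ∈ Set.Ici (0:ℝ), ∀ i : Fin N,
    HasDerivWithinAt (fun s => φ s i)
      (∑ j ∈ Finset.univ.erase i, 1 / (φ t i - φ t j)) (Set.Ici 0) t

open Finset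

theorem two_mul_sum_sum_erase_div_sub {ι : Type*} [Fintype ι] [DecidableEq ι] {y : ι → ℝ}
    (hy : Function.Injective y) :
    2 * ∑ i, ∑ j ∈ univ.erase i, y i / (y i - y j)
      = Fintype.card ι * (Fintype.card ι - 1) := by
  have swap : ∑ i, ∑ j ∈ univ.erase i, y i / (y i - y j)
      = ∑ i, ∑ j ∈ univ.erase i, y j / (y j - y i) :=
    sum_comm' fun i j => by simp [mem_erase, ne_comm, and_comm]
  have pair : ∀ i, ∀ j ∈ univ.erase i, y i / (y i - y j) + y j / (y j - y i) = 1 := by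
    intro i j hj
    have hij : y i - y j ≠ 0 := sub_ne_zero.2 (hy.ne (mem_erase.1 hj).1.symm)
    rw [← neg_sub (y i), div_neg, ← sub_eq_add_neg, ← sub_div, div_self hij]
  calc 2 * ∑ i, ∑ j ∈ univ.erase i, y i / (y i - y j)
      = ∑ i, ∑ j ∈ univ.erase i, (y i / (y i - y j) + y j / (y j - y i)) := by
        rw [two_mul]
        nth_rewrite 2 [swap]
        simp only [← sum_add_distrib]
    _ = ∑ _i : ι, ((Fintype.card ι : ℝ) - 1) := by
        refine sum_congr rfl fun i _ => ?_
        rw [sum_congr rfl (pair i), sum_const, card_erase_of_mem (mem_univ i), card_univ,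
          nsmul_one, Nat.cast_pred (Fintype.card_pos_iff.2 ⟨i⟩)]
    _ = Fintype.card ι * (Fintype.card ι - 1) := by
        simp only [sum_const, card_univ, nsmul_eq_mul]

theorem hasDerivWithinAt_sum_sq_of_solvesA {N : ℕ} {φ : ℝ → Fin N → ℝ} (hode : solvesA φ)
    {t : ℝ} (ht : t ∈ Set.Ici 0) (hinj : Function.Injective (φ t)) :
    HasDerivWithinAt (fun s => ∑ i, φ s i ^ 2) (N * (N - 1)) (Set.Ici 0) t := by
  refine (HasDerivWithinAt.fun_sum fun i _ => (hode t ht i).fun_pow 2).congr_deriv ?_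
  have hpairs := two_mul_sum_sum_erase_div_sub hinj
  rw [Fintype.card_fin] at hpairs
  rw [← hpairs, mul_sum]
  refine sum_congr rfl fun i _ => ?_
  rw [mul_sum, mul_sum]
  refine sum_congr rfl fun j _ => ?_
  push_cast
  ring

theorem eq_mul_sub_add_of_hasDerivWithinAt_Ici {g : ℝ → ℝ} {c a : ℝ}
    (hg : ∀ t ∈ Set.Ici a, HasDerivWithinAt g c (Set.Ici a) t) :
    ∀ t ∈ Set.Ici a, g t = c * (t - a) + g a := by
  intro t ht
  have hconst := constant_of_has_deriv_right_zero (f := fun s => g s - c * (s - a)) (b := t)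
    (fun s hs => ((hg s hs.1).continuousWithinAt.mono fun _ hu => hu.1).sub
      (by fun_prop))
    (fun s hs => by
      simpa [Pi.sub_def] using ((hg s hs.1).mono (Set.Ici_subset_Ici.2 hs.1)).sub
        (((hasDerivAt_id s).sub_const a).const_mul c).hasDerivWithinAt)
    t (Set.right_mem_Icc.2 ht)
  simp only [sub_self, mul_zero, sub_zero] at hconst
  linarith

theorem EuclideanSpace.norm_equiv_symm_sq {ι : Type*} [Fintype ι] (v : ι → ℝ) :
    ‖(WithLp.equiv 2 (ι → ℝ)).symm v‖ ^ 2 = ∑ i, v i ^ 2 := by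
  simp [EuclideanSpace.real_norm_sq_eq]

theorem statement2 (N : ℕ) (x : Fin N → ℝ)
    (φ : ℝ → Fin N → ℝ) (hφ0 : φ 0 = x)
    (hint : ∀ t ∈ Set.Ici (0:ℝ), interiorA (φ t))
    (hode : solvesA φ) :
    ∀ t ∈ Set.Ici (0:ℝ),
      ‖(WithLp.equiv 2 (Fin N → ℝ)).symm (φ t)‖^2
        = N * (N - 1) * t + ‖(WithLp.equiv 2 (Fin N → ℝ)).symm x‖^2 := by
  intro t ht
  have haffine := eq_mul_sub_add_of_hasDerivWithinAt_Ici
    (fun s hs => hasDerivWithinAt_sum_sq_of_solvesA hode hs (hint s hs).injective) t ht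
  rw [EuclideanSpace.norm_equiv_symm_sq, EuclideanSpace.norm_equiv_symm_sq, ← hφ0, haffine,
    sub_zero]
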